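/- arXiv:0812.4964 — 4 statements merged into one kernel-verified Lean document; each statement's English description precedes it below -/
import Mathlib

section
/- Let n ≥ 0, let b_0,…,b_n be positive integers, and set P_b = ∏_{k=0}^{n}(1 − u^{−b_k}) in ℤ[u,u⁻¹]. Then the quotient ring ℤ[u,u⁻¹]/⟨P_b⟩ is torsion-free as an additive abelian group: for every nonzero integer m and every element f of the quotient, m·f = 0 implies f = 0. -/
/-!
Over `𝔽_p` every factor `1 - u^{-b_k}` is a nonzero Laurent polynomial, so `P_b` does not vanish
mod `p`; since `p` is prime in `ℤ[u,u⁻¹]` (the quotient `𝔽_p[u,u⁻¹]` is a domain), `p g = P_b h`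
forces `p ∣ h` and hence `P_b ∣ g`. Thus multiplication by each prime is injective on
`ℤ[u,u⁻¹]/⟨P_b⟩`, and so is multiplication by any nonzero integer.
-/

theorem eq_zero_of_zsmul_eq_zero_of_forall_prime {M : Type*} [AddCommGroup M]
    (h : ∀ p : ℕ, p.Prime → ∀ x : M, p • x = 0 → x = 0)
    {m : ℤ} (hm : m ≠ 0) {x : M} (hx : m • x = 0) : x = 0 := by
  have key : ∀ n : ℕ, n ≠ 0 → ∀ x : M, n • x = 0 → x = 0 := by
    intro n
    induction n using induction_on_primes with
    | zero => exact fun h0 => absurd rfl h0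
    | one => exact fun _ x hx => by rwa [one_smul] at hx
    | prime_mul p n hp ih =>
      intro hpn x hx
      rw [mul_nsmul'] at hx
      exact ih (right_ne_zero_of_mul hpn) x (h p hp _ hx)
  exact key m.natAbs (Int.natAbs_ne_zero.mpr hm) x (natAbs_nsmul_eq_zero.mpr hx)

theorem Ideal.Quotient.eq_zero_of_mk_mul_eq_zero_of_prime {A : Type*} [CommRing A] [IsDomain A]
    {p P : A} (hp : Prime p) (hP : ¬p ∣ P) {x : A ⧸ Ideal.span {P}}
    (hx : Ideal.Quotient.mk _ p * x = 0) : x = 0 := by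
  obtain ⟨g, rfl⟩ := Ideal.Quotient.mk_surjective x
  rw [← map_mul, Ideal.Quotient.eq_zero_iff_mem, Ideal.mem_span_singleton'] at hx
  obtain ⟨h, hh⟩ := hx
  obtain ⟨h', rfl⟩ := (hp.dvd_or_dvd ⟨g, by rw [← hh, mul_comm]⟩).resolve_left hP
  have hg : g = h' * P := mul_left_cancel₀ hp.ne_zero (by rw [← hh]; ring)
  rw [Ideal.Quotient.eq_zero_iff_mem, Ideal.mem_span_singleton']
  exact ⟨h', hg.symm⟩

namespace LaurentPolynomial

theorem C_dvd_of_forall_dvd_coeff {R : Type*} [CommSemiring R] {c : R} {x : R[T;T⁻¹]}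
    (h : ∀ a, c ∣ x.coeff a) : C c ∣ x := by
  rw [← AddMonoidAlgebra.sum_coeff_single x]
  refine Finset.dvd_sum fun a _ => ?_
  obtain ⟨d, hd⟩ := h a
  rw [hd, single_eq_C_mul_T, map_mul, mul_assoc]
  exact dvd_mul_right _ _

theorem one_sub_T_ne_zero {R : Type*} [CommRing R] [Nontrivial R] {a : ℤ} (ha : a ≠ 0) :
    (1 - T a : R[T;T⁻¹]) ≠ 0 := by
  rw [sub_ne_zero, ← T_zero]
  exact fun h => ha ((AddMonoidAlgebra.single_left_inj one_ne_zero).1 h).symm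

theorem natCast_ne_zero {R : Type*} [Semiring R] [CharZero R] {n : ℕ} (hn : n ≠ 0) :
    (n : R[T;T⁻¹]) ≠ 0 := by
  rw [← map_natCast C, ← single_eq_C, Ne, AddMonoidAlgebra.single_eq_zero]
  exact_mod_cast hn

theorem mapRingHom_T {R S : Type*} [Semiring R] [Semiring S] (f : R →+* S) (a : ℤ) :
    AddMonoidAlgebra.mapRingHom ℤ f (T a) = T a := by
  rw [T, AddMonoidAlgebra.mapRingHom_single, map_one]
  rfl

theorem ker_mapRingHom_intCastZMod (n : ℕ) :
    RingHom.ker (AddMonoidAlgebra.mapRingHom ℤ (Int.castRingHom (ZMod n))) =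
      Ideal.span {(n : ℤ[T;T⁻¹])} := by
  ext x
  rw [RingHom.mem_ker, Ideal.mem_span_singleton]
  constructor
  · intro hx
    rw [← map_natCast C]
    refine C_dvd_of_forall_dvd_coeff fun a => ?_
    rw [← ZMod.intCast_zmod_eq_zero_iff_dvd, ← eq_intCast (Int.castRingHom (ZMod n)),
      ← AddMonoidAlgebra.coeff_mapRingHom, hx]
    rfl
  · rintro ⟨y, rfl⟩
    rw [map_mul, map_natCast, ← map_natCast C, ZMod.natCast_self, map_zero, zero_mul]

theorem prime_natCast {p : ℕ} (hp : p.Prime) : Prime (p : ℤ[T;T⁻¹]) := by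
  have : Fact p.Prime := ⟨hp⟩
  rw [← Ideal.span_singleton_prime (natCast_ne_zero hp.ne_zero), ← ker_mapRingHom_intCastZMod]
  exact RingHom.ker_isPrime _

theorem not_natCast_dvd_prod_one_sub_T {ι : Type*} [Fintype ι] {p : ℕ} (hp : p.Prime)
    {b : ι → ℤ} (hb : ∀ k, b k ≠ 0) : ¬(p : ℤ[T;T⁻¹]) ∣ ∏ k, (1 - T (b k)) := by
  have : Fact p.Prime := ⟨hp⟩
  rw [← Ideal.mem_span_singleton, ← ker_mapRingHom_intCastZMod, RingHom.mem_ker, map_prod]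
  refine Finset.prod_ne_zero_iff.mpr fun k _ => ?_
  rw [map_sub, map_one, mapRingHom_T]
  exact one_sub_T_ne_zero (hb k)

end LaurentPolynomial

/-- The quotient of the Laurent polynomial ring `ℤ[u,u⁻¹]` by the principal ideal
generated by `P_b = ∏_{k=0}^{n} (1 - u^{-b_k})`, for positive integers `b_k`, is
torsion-free as an additive abelian group. -/
theorem quotient_by_prod_one_sub_T_neg_torsionFree
    (n : ℕ) (b : Fin (n + 1) → ℤ) (hb : ∀ k, 0 < b k)
    (m : ℤ) (hm : m ≠ 0)
    (f : LaurentPolynomial ℤ ⧸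
      Ideal.span {∏ k : Fin (n + 1), ((1 : LaurentPolynomial ℤ) - LaurentPolynomial.T (-(b k)))})
    (hf : m • f = 0) : f = 0 := by
  refine eq_zero_of_zsmul_eq_zero_of_forall_prime (fun p hp x hx => ?_) hm hf
  refine Ideal.Quotient.eq_zero_of_mk_mul_eq_zero_of_prime (LaurentPolynomial.prime_natCast hp)
    (LaurentPolynomial.not_natCast_dvd_prod_one_sub_T hp fun k => neg_ne_zero.mpr (hb k).ne') ?_
  rwa [map_natCast, ← nsmul_eq_mul]
end

section
/- Let n ≥ 0, let b_0,…,b_n be positive integers, and let ℓ = lcm(b_0,…,b_n). For each s ∈ {0,…,ℓ−1}, let A_s denote the quotient ring ℤ[u,u⁻¹]/⟨∏_{k : ℓ ∣ b_k·s}(1 − u^{−b_k})⟩, where the product is over those indices k with ℓ dividing b_k·s. Then the direct sum ⊕_{s=0}^{ℓ−1} A_s is torsion-free as an additive abelian group (a ℤ-module with no torsion). -/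
/-!
Each summand is `ℤ[u,u⁻¹] ⧸ (g)` for `g = ∏ (u ^ b_k - 1)`, since the factors `u ^ (-b_k)` are
units. This `g` is monic with constant term `±1`, so `u` is already invertible in `ℤ[u] ⧸ (g)` and
inverting it changes nothing: the summand is `ℤ[u] ⧸ (g)`, which is free over `ℤ` with basis
`1, u, …, u ^ (deg g - 1)`.
-/

open Polynomial LaurentPolynomial

theorem AdjoinRoot.isUnit_root_of_isUnit_coeff_zero {R : Type*} [CommRing R] {g : R[X]}
    (hg : IsUnit (g.coeff 0)) : IsUnit (root g) := by
  have h : aeval (root g) (X * g.divX + Polynomial.C (g.coeff 0)) = 0 := by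
    rw [X_mul_divX_add, aeval_eq, mk_self]
  rw [map_add, map_mul, aeval_X, aeval_C] at h
  exact isUnit_of_mul_isUnit_left (eq_neg_of_add_eq_zero_left h ▸ (hg.map _).neg)

namespace Polynomial

variable {R ι : Type*} [CommRing R] (s : Finset ι) (b : ι → ℕ) (hb : ∀ k ∈ s, 0 < b k)
include hb

theorem monic_prod_X_pow_sub_one : (∏ k ∈ s, (X ^ b k - 1 : R[X])).Monic :=
  monic_prod_of_monic _ _ fun k hk => by simpa using monic_X_pow_sub_C (1 : R) (hb k hk).ne'

theorem coeff_zero_prod_X_pow_sub_one :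
    (∏ k ∈ s, (X ^ b k - 1 : R[X])).coeff 0 = (-1) ^ s.card := by
  rw [coeff_zero_prod, ← Finset.prod_const]
  exact Finset.prod_congr rfl fun k hk => by simp [(hb k hk).ne]

end Polynomial

namespace LaurentPolynomial

section AdjoinRoot

variable {R : Type*} [CommRing R] {g : R[X]} (hg : IsUnit (g.coeff 0))

noncomputable def toAdjoinRoot : R[T;T⁻¹] →+* AdjoinRoot g :=
  eval₂ (algebraMap R (AdjoinRoot g)) (AdjoinRoot.isUnit_root_of_isUnit_coeff_zero hg).unit

theorem toAdjoinRoot_toLaurent (p : R[X]) : toAdjoinRoot hg (toLaurent p) = AdjoinRoot.mk g p := by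
  rw [toAdjoinRoot, eval₂_toLaurent, ← AdjoinRoot.aeval_eq, aeval_def, IsUnit.unit_spec]

theorem toAdjoinRoot_surjective : Function.Surjective (toAdjoinRoot hg) := by
  intro x
  obtain ⟨p, rfl⟩ := AdjoinRoot.mk_surjective x
  exact ⟨toLaurent p, toAdjoinRoot_toLaurent hg p⟩

theorem ker_toAdjoinRoot : RingHom.ker (toAdjoinRoot hg) = Ideal.span {toLaurent g} := by
  refine le_antisymm (fun f hf => ?_) ?_
  · obtain ⟨n, p, hp⟩ := exists_T_pow f
    have hgp : g ∣ p := by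
      rw [← AdjoinRoot.mk_eq_zero, ← toAdjoinRoot_toLaurent hg, hp, map_mul, hf, zero_mul]
    obtain ⟨q, rfl⟩ := hgp
    refine Ideal.mem_span_singleton.mpr ⟨toLaurent q * T (-n), ?_⟩
    rw [← mul_assoc, ← map_mul, hp, mul_assoc, ← T_add, add_neg_cancel, T_zero, mul_one]
  · rw [Ideal.span_le, Set.singleton_subset_iff, SetLike.mem_coe, RingHom.mem_ker,
      toAdjoinRoot_toLaurent, AdjoinRoot.mk_self]

noncomputable def quotientSpanToLaurentEquivAdjoinRoot :
    R[T;T⁻¹] ⧸ Ideal.span {toLaurent g} ≃+* AdjoinRoot g :=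
  (Ideal.quotEquivOfEq (ker_toAdjoinRoot hg).symm).trans
    (RingHom.quotientKerEquivOfSurjective (toAdjoinRoot_surjective hg))

end AdjoinRoot

theorem span_prod_one_sub_T_neg {R ι : Type*} [CommRing R] (s : Finset ι) (b : ι → ℕ) :
    Ideal.span {∏ k ∈ s, (1 - T (-(b k : ℤ)) : R[T;T⁻¹])} =
      Ideal.span {toLaurent (∏ k ∈ s, (X ^ b k - 1 : R[X]))} := by
  have h : ∀ k, (1 - T (-(b k : ℤ)) : R[T;T⁻¹]) = T (-(b k : ℤ)) * toLaurent (X ^ b k - 1) := by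
    intro k
    rw [map_sub, toLaurent_X_pow, map_one, mul_sub, ← T_add, neg_add_cancel, T_zero, mul_one]
  simp_rw [h, Finset.prod_mul_distrib, map_prod]
  exact Ideal.span_singleton_mul_left_unit (IsUnit.prod_iff.mpr fun k _ => isUnit_T _) _

theorem isTorsionFree_quotient_span_toLaurent {g : ℤ[X]} (hmonic : g.Monic)
    (hg : IsUnit (g.coeff 0)) : Module.IsTorsionFree ℤ (ℤ[T;T⁻¹] ⧸ Ideal.span {toLaurent g}) :=
  have : Module.Free ℤ (AdjoinRoot g) := .of_basis (AdjoinRoot.powerBasis' hmonic).basis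
  let e := quotientSpanToLaurentEquivAdjoinRoot hg
  e.injective.moduleIsTorsionFree e (map_zsmul e)

theorem isTorsionFree_quotient_span_prod_one_sub_T_neg {ι : Type*}
    (s : Finset ι) (b : ι → ℕ) (hb : ∀ k ∈ s, 0 < b k) :
    Module.IsTorsionFree ℤ (ℤ[T;T⁻¹] ⧸ Ideal.span {∏ k ∈ s, (1 - T (-(b k : ℤ)) : ℤ[T;T⁻¹])}) := by
  rw [span_prod_one_sub_T_neg]
  refine isTorsionFree_quotient_span_toLaurent (monic_prod_X_pow_sub_one s b hb) ?_
  rw [coeff_zero_prod_X_pow_sub_one s b hb]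
  exact isUnit_one.neg.pow _

end LaurentPolynomial

theorem directSum_sectors_torsionFree_general
    (n : ℕ) (b : Fin (n + 1) → ℕ) (hb : ∀ k, 0 < b k)
    (ℓ : ℕ)
    (m : ℤ) (hm : m ≠ 0)
    (f : DirectSum (Fin ℓ) (fun s => LaurentPolynomial ℤ ⧸
      Ideal.span {∏ k ∈ Finset.univ.filter (fun k => (ℓ : ℤ) ∣ (b k : ℤ) * (s : ℤ)),
        ((1 : LaurentPolynomial ℤ) - LaurentPolynomial.T (-(b k : ℤ)))}))
    (hf : m • f = 0) : f = 0 := by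
  have := fun s : Fin ℓ => isTorsionFree_quotient_span_prod_one_sub_T_neg
    (Finset.univ.filter fun k => (ℓ : ℤ) ∣ (b k : ℤ) * (s : ℤ)) b fun k _ => hb k
  exact (smul_eq_zero.mp hf).resolve_left hm

/-- For positive integers `b_0, …, b_n` with `ℓ = lcm(b_0, …, b_n)`, the direct sum over
`s ∈ {0, …, ℓ-1}` of the quotient rings
`ℤ[u,u⁻¹] ⧸ ⟨∏_{k : ℓ ∣ b_k s} (1 - u^{-b_k})⟩` is torsion-free as an abelian group. -/
theorem directSum_sectors_torsionFree
    (n : ℕ) (b : Fin (n + 1) → ℕ) (hb : ∀ k, 0 < b k)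
    (ℓ : ℕ) (hℓ : ℓ = Finset.univ.lcm b)
    (m : ℤ) (hm : m ≠ 0)
    (f : DirectSum (Fin ℓ) (fun s => LaurentPolynomial ℤ ⧸
      Ideal.span {∏ k ∈ Finset.univ.filter (fun k => (ℓ : ℤ) ∣ (b k : ℤ) * (s : ℤ)),
        ((1 : LaurentPolynomial ℤ) - LaurentPolynomial.T (-(b k : ℤ)))}))
    (hf : m • f = 0) : f = 0 :=
  directSum_sectors_torsionFree_general n b hb ℓ m hm f hf
end

section
/- Let n ≥ 0, let b_0,…,b_n be positive integers, and set P_b = ∏_{k=0}^{n}(1 − u^{−b_k}) in ℤ[u,u⁻¹]. If m is an integer with m ≥ 2 and F ∈ ℤ[u,u⁻¹] satisfies m·F ∈ ⟨P_b⟩ (the principal ideal generated by P_b), then F ∈ ⟨P_b⟩. -/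
/-!
Up to the unit `∏ T (-b_k)`, `P_b` is the image of the monic, hence primitive, integer polynomial
`∏ (X ^ b_k - 1)`. Multiplying by a power of `T` moves the divisibility `P_b ∣ m • F` into `ℤ[X]`,
where Gauss's lemma (the content is multiplicative) lets one cancel `m`.
-/

open LaurentPolynomial Polynomial

theorem Polynomial.IsPrimitive.dvd_of_dvd_C_mul {R : Type*} [CommRing R] [IsDomain R]
    [NormalizedGCDMonoid R] {p f : R[X]} (hp : p.IsPrimitive) {r : R} (hr : r ≠ 0)
    (h : p ∣ C r * f) : p ∣ f := by
  obtain ⟨g, hg⟩ := h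
  have hr_dvd : r ∣ g.content := by
    have h₁ := (associated_content_C_mul r f).symm.trans (.of_eq (congrArg content hg))
    have h₂ := (associated_content_mul p g).trans (.of_eq (by rw [hp.content_eq_one, one_mul]))
    exact (h₁.trans h₂).dvd_iff_dvd_right.mp (dvd_mul_right r _)
  obtain ⟨g', rfl⟩ := dvd_content_iff_C_dvd.mp hr_dvd
  refine ⟨g', mul_left_cancel₀ (C_ne_zero.mpr hr) ?_⟩
  rw [hg]
  ring

theorem Polynomial.exists_dvd_X_pow_mul_of_toLaurent_dvd {R : Type*} [CommSemiring R]
    {p f : R[X]} (h : toLaurent p ∣ toLaurent f) : ∃ k : ℕ, p ∣ X ^ k * f := by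
  obtain ⟨G, hG⟩ := h
  obtain ⟨k, g, hg⟩ := exists_T_pow G
  refine ⟨k, g, toLaurent_injective ?_⟩
  rw [map_mul, map_mul, toLaurent_X_pow, hg, hG]
  ring

theorem LaurentPolynomial.toLaurent_dvd_of_dvd_C_mul {R : Type*} [CommRing R] [IsDomain R]
    [NormalizedGCDMonoid R] {p : R[X]} (hp : p.IsPrimitive) {r : R} (hr : r ≠ 0)
    {F : R[T;T⁻¹]} (h : toLaurent p ∣ C r * F) : toLaurent p ∣ F := by
  obtain ⟨n, f, hf⟩ := exists_T_pow F
  rw [← (isUnit_T (n : ℤ)).dvd_mul_right, ← hf]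
  have hCf : toLaurent p ∣ toLaurent (Polynomial.C r * f) := by
    rw [map_mul, hf, toLaurent_C, ← mul_assoc]
    exact h.mul_right _
  obtain ⟨k, hk⟩ := exists_dvd_X_pow_mul_of_toLaurent_dvd hCf
  have hpk : p ∣ X ^ k * f := hp.dvd_of_dvd_C_mul hr (by rwa [mul_left_comm])
  rw [← (isUnit_T (k : ℤ)).dvd_mul_left, ← toLaurent_X_pow, ← map_mul]
  exact map_dvd toLaurent hpk

theorem LaurentPolynomial.one_sub_T_neg {R : Type*} [Ring R] (n : ℕ) :
    (1 - T (-n) : R[T;T⁻¹]) = T (-n) * toLaurent (X ^ n - 1) := by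
  rw [map_sub, map_one, toLaurent_X_pow, mul_sub, ← T_add, neg_add_cancel, T_zero, mul_one]

theorem LaurentPolynomial.associated_toLaurent_prod_X_pow_sub_one {R : Type*} [CommRing R]
    {ι : Type*} (s : Finset ι) (b : ι → ℕ) :
    Associated (toLaurent (∏ i ∈ s, (X ^ b i - 1)))
      (∏ i ∈ s, (1 - T (-(b i : ℤ))) : R[T;T⁻¹]) := by
  rw [Finset.prod_congr rfl fun i _ => one_sub_T_neg (b i), Finset.prod_mul_distrib, map_prod]
  exact (associated_unit_mul_left _ _ (IsUnit.prod_iff.mpr fun i _ => isUnit_T _)).symm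

/-- If `m ≥ 2` and `m • F` lies in the principal ideal of `ℤ[u,u⁻¹]` generated by
`P_b = ∏_{k=0}^{n} (1 - u^{-b_k})` (with all `b_k > 0`), then `F` lies in that ideal. -/
theorem mem_span_of_smul_mem_span_prod_one_sub_T_neg
    (n : ℕ) (b : Fin (n + 1) → ℤ) (hb : ∀ k, 0 < b k)
    (m : ℤ) (hm : 2 ≤ m) (F : LaurentPolynomial ℤ)
    (hF : m • F ∈ Ideal.span
      {∏ k : Fin (n + 1), ((1 : LaurentPolynomial ℤ) - LaurentPolynomial.T (-(b k)))}) :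
    F ∈ Ideal.span
      {∏ k : Fin (n + 1), ((1 : LaurentPolynomial ℤ) - LaurentPolynomial.T (-(b k)))} := by
  lift b to Fin (n + 1) → ℕ using fun k => (hb k).le
  have hmonic : (∏ k, (X ^ b k - 1 : ℤ[X])).Monic :=
    monic_prod_of_monic _ _ fun k _ => by
      simpa using monic_X_pow_sub_C (1 : ℤ) (Int.natCast_pos.mp (hb k)).ne'
  rw [Ideal.mem_span_singleton] at hF ⊢
  rw [LaurentPolynomial.smul_eq_C_mul] at hF
  rw [← (associated_toLaurent_prod_X_pow_sub_one _ b).dvd_iff_dvd_left] at hF ⊢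
  exact toLaurent_dvd_of_dvd_C_mul hmonic.isPrimitive (by omega) hF
end

section
/- Let n ≥ 0, let b_0,…,b_n be positive integers, and let ℓ = lcm(b_0,…,b_n) (so ℓ > 0). For s, s' ∈ ZMod ℓ and each index k, define e_k(s,s') = 1 if (b_k·s.val mod ℓ) + (b_k·s'.val mod ℓ) ≥ ℓ and e_k(s,s') = 0 otherwise. On the free ℤ[u,u⁻¹]-module with basis {α_s : s ∈ ZMod ℓ} (i.e., ZMod ℓ →₀ ℤ[u,u⁻¹]), define a ℤ[u,u⁻¹]-bilinear multiplication by α_s ⋆ α_{s'} = (∏_{k=0}^{n}(1 − u^{−b_k})^{e_k(s,s')})·α_{s+s'}. Then this multiplication is commutative and associative, and α_0 is a two-sided multiplicative identity. -/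
/-!
Writing `t = b_k • s`, the exponent `e_k(s, s')` is the carry `[ℓ ≤ t.val + t'.val]` of adding
two residues mod `ℓ`. Since `ℓ · carry t t' = t.val + t'.val - (t + t').val` is a coboundary,
the carry is a symmetric normalized additive 2-cocycle on `ZMod ℓ`, hence so is every product
`∏ k, q_k ^ carry (w_k s) (w_k s')`. The `⋆` product is therefore the multiplication of a twisted
group algebra of `ZMod ℓ` by a symmetric normalized cocycle, and by bilinearity commutativity,
associativity and unitality only need to be checked on basis vectors, where they are exactly
the symmetry, cocycle and normalization identities.
-/

open Finsupp

namespace Finsupp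

variable {R G : Type*} [CommSemiring R]

theorem bilinear_comm_of_single {B : (G →₀ R) →ₗ[R] (G →₀ R) →ₗ[R] (G →₀ R)}
    (h : ∀ i j, B (single i 1) (single j 1) = B (single j 1) (single i 1)) (x y : G →₀ R) :
    B x y = B y x := by
  have hB : B = B.flip :=
    Finsupp.basisSingleOne.ext fun i => Finsupp.basisSingleOne.ext fun j => by simpa using h i j
  exact LinearMap.congr_fun₂ hB x y

theorem bilinear_assoc_of_single {B : (G →₀ R) →ₗ[R] (G →₀ R) →ₗ[R] (G →₀ R)}
    (h : ∀ i j k, B (B (single i 1) (single j 1)) (single k 1) =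
      B (single i 1) (B (single j 1) (single k 1))) (x y z : G →₀ R) :
    B (B x y) z = B x (B y z) := by
  have hB : B.compr₂ B = (LinearMap.llcomp R _ _ _ ∘ₗ B).compl₂ B :=
    Finsupp.basisSingleOne.ext fun i => Finsupp.basisSingleOne.ext fun j =>
      Finsupp.basisSingleOne.ext fun k => by simpa using h i j k
  exact LinearMap.congr_fun (LinearMap.congr_fun₂ hB x y) z

theorem linearMap_apply_eq_self_of_single {f : (G →₀ R) →ₗ[R] (G →₀ R)}
    (h : ∀ i, f (single i 1) = single i 1) (x : G →₀ R) : f x = x :=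
  LinearMap.congr_fun (Finsupp.basisSingleOne.ext (f₂ := LinearMap.id) (by simpa using h)) x

section TwistedProduct

variable [AddCommMonoid G] {c : G → G → R} {B : (G →₀ R) →ₗ[R] (G →₀ R) →ₗ[R] (G →₀ R)}

theorem bilinear_comm_of_twisted
    (hB : ∀ i j, B (single i 1) (single j 1) = c i j • single (i + j) 1)
    (hc : ∀ i j, c i j = c j i) (x y : G →₀ R) : B x y = B y x :=
  bilinear_comm_of_single (fun i j => by rw [hB, hB, hc, add_comm]) x y

theorem bilinear_assoc_of_twisted
    (hB : ∀ i j, B (single i 1) (single j 1) = c i j • single (i + j) 1)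
    (hc : ∀ i j k, c i j * c (i + j) k = c j k * c i (j + k)) (x y z : G →₀ R) :
    B (B x y) z = B x (B y z) :=
  bilinear_assoc_of_single (fun i j k => by
    rw [hB, hB, map_smul, LinearMap.smul_apply, map_smul, hB, hB, smul_smul, smul_smul,
      hc, add_assoc]) x y z

theorem bilinear_single_zero_left_of_twisted
    (hB : ∀ i j, B (single i 1) (single j 1) = c i j • single (i + j) 1)
    (hc : ∀ i, c 0 i = 1) (x : G →₀ R) : B (single 0 1) x = x :=
  linearMap_apply_eq_self_of_single (fun i => by rw [hB, hc, one_smul, zero_add]) x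

theorem bilinear_single_zero_right_of_twisted
    (hB : ∀ i j, B (single i 1) (single j 1) = c i j • single (i + j) 1)
    (hc : ∀ i, c i 0 = 1) (x : G →₀ R) : B x (single 0 1) = x :=
  linearMap_apply_eq_self_of_single (f := B.flip (single 0 1))
    (fun i => by rw [LinearMap.flip_apply, hB, hc, one_smul, add_zero]) x

end TwistedProduct

end Finsupp

namespace ZMod

variable {ℓ : ℕ} {ι M : Type*} [Fintype ι] [CommMonoid M]

def carry (t t' : ZMod ℓ) : ℕ := if ℓ ≤ t.val + t'.val then 1 else 0

def carryProd (q : ι → M) (w : ι → ZMod ℓ) (s s' : ZMod ℓ) : M :=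
  ∏ k, q k ^ carry (w k * s) (w k * s')

theorem carry_comm (t t' : ZMod ℓ) : carry t t' = carry t' t := by
  rw [carry, carry, Nat.add_comm]

theorem carryProd_comm (q : ι → M) (w : ι → ZMod ℓ) (s s' : ZMod ℓ) :
    carryProd q w s s' = carryProd q w s' s := by
  simp only [carryProd, carry_comm (w _ * s)]

variable [NeZero ℓ]

theorem val_natCast_mul (a : ℕ) (t : ZMod ℓ) : ((a : ZMod ℓ) * t).val = a * t.val % ℓ := by
  rw [← val_natCast, Nat.cast_mul, natCast_zmod_val]

theorem val_add_add_carry (t t' : ZMod ℓ) : (t + t').val + ℓ * carry t t' = t.val + t'.val := by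
  unfold carry
  split_ifs with h
  · rw [val_add_val_of_le h, mul_one]
  · rw [val_add_of_lt (not_le.1 h), mul_zero, add_zero]

theorem carry_zero_left (t : ZMod ℓ) : carry 0 t = 0 := by
  rw [carry, val_zero, zero_add, if_neg (not_le.2 t.val_lt)]

theorem carry_add_carry_add (t t' t'' : ZMod ℓ) :
    carry t t' + carry (t + t') t'' = carry t' t'' + carry t (t' + t'') := by
  refine Nat.eq_of_mul_eq_mul_left (NeZero.pos ℓ) ?_
  have h₁ := val_add_add_carry t t'
  have h₂ := val_add_add_carry (t + t') t''
  have h₃ := val_add_add_carry t' t''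
  have h₄ := val_add_add_carry t (t' + t'')
  rw [add_assoc] at h₂
  linarith

variable (q : ι → M) (w : ι → ZMod ℓ)

theorem carryProd_zero_left (s : ZMod ℓ) : carryProd q w 0 s = 1 := by
  simp only [carryProd, mul_zero, carry_zero_left, pow_zero, Finset.prod_const_one]

theorem carryProd_zero_right (s : ZMod ℓ) : carryProd q w s 0 = 1 := by
  rw [carryProd_comm, carryProd_zero_left]

theorem carryProd_mul_carryProd_add (s s' s'' : ZMod ℓ) :
    carryProd q w s s' * carryProd q w (s + s') s'' =
      carryProd q w s' s'' * carryProd q w s (s' + s'') := by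
  simp only [carryProd, ← Finset.prod_mul_distrib, ← pow_add, mul_add, carry_add_carry_add]

end ZMod

open ZMod

/-- The `⋆` product on the Γ-subring of the inertial K-theory of `ℂ^{n+1}` with the
weighted circle action: on the free `ℤ[u,u⁻¹]`-module with basis `{α_s : s ∈ ZMod ℓ}`
(`ℓ = lcm(b_0,…,b_n)`), the bilinear multiplication determined by
`α_s ⋆ α_{s'} = (∏_k (1 - u^{-b_k})^{e_k(s,s')}) • α_{s+s'}` is commutative,
associative, and has `α_0` as a two-sided identity. -/
theorem inertial_star_product_comm_assoc_unital
    (n : ℕ) (b : Fin (n + 1) → ℕ) (hb : ∀ k, 0 < b k)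
    (ℓ : ℕ) (hℓ : ℓ = Finset.univ.lcm b)
    (star : (ZMod ℓ →₀ LaurentPolynomial ℤ) →ₗ[LaurentPolynomial ℤ]
      (ZMod ℓ →₀ LaurentPolynomial ℤ) →ₗ[LaurentPolynomial ℤ]
      (ZMod ℓ →₀ LaurentPolynomial ℤ))
    (hstar : ∀ s s' : ZMod ℓ,
      star (Finsupp.single s 1) (Finsupp.single s' 1) =
        (∏ k : Fin (n + 1),
            ((1 : LaurentPolynomial ℤ) - LaurentPolynomial.T (-(b k : ℤ))) ^
              (if ℓ ≤ (b k * s.val) % ℓ + (b k * s'.val) % ℓ then 1 else 0)) •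
          Finsupp.single (s + s') (1 : LaurentPolynomial ℤ)) :
    (∀ x y, star x y = star y x) ∧
    (∀ x y z, star (star x y) z = star x (star y z)) ∧
    (∀ x, star (Finsupp.single 0 1) x = x) ∧
    (∀ x, star x (Finsupp.single 0 1) = x) := by
  have : NeZero ℓ := ⟨by simpa [hℓ, Finset.lcm_eq_zero_iff] using fun k => (hb k).ne'⟩
  set q : Fin (n + 1) → LaurentPolynomial ℤ := fun k => 1 - LaurentPolynomial.T (-(b k : ℤ))
  set w : Fin (n + 1) → ZMod ℓ := fun k => b k
  have hstar' (s s' : ZMod ℓ) :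
      star (single s 1) (single s' 1) = carryProd q w s s' • single (s + s') 1 := by
    simp only [hstar, carryProd, carry, val_natCast_mul, q, w]
  exact ⟨bilinear_comm_of_twisted hstar' (carryProd_comm q w),
    bilinear_assoc_of_twisted hstar' (carryProd_mul_carryProd_add q w),
    bilinear_single_zero_left_of_twisted hstar' (carryProd_zero_left q w),
    bilinear_single_zero_right_of_twisted hstar' (carryProd_zero_right q w)⟩
end
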